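/- Let p ≥ 2 be an integer, let F : ℂ² → ℂ² be a holomorphic map, and let (z₀, w₀) ∈ ℂ² with z₀ ≠ 0 be such that F(e^{2πiℓ/p}·z₀, w₀) = 0 for every ℓ = 0, 1, …, p−1. Define F_p(z,w) := F(z,w) + (e^{2πi/p}·z, w). Then (z₀, w₀) is a p-primitive periodic point of F_p, i.e., F_p^{∘p}(z₀,w₀) = (z₀,w₀) while F_p^{∘j}(z₀,w₀) ≠ (z₀,w₀) for all 1 ≤ j ≤ p−1. -/

import Mathlib

/-! Where `F` vanishes, `F_p` acts as the rotation `(z, w) ↦ (e^{2πi/p} z, w)`, and the hypothesis says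
exactly that `F` vanishes along the first `p` points of the rotation orbit of `(z₀, w₀)`. So the
`F_p`-orbit is the rotation orbit, which has exact period `p` because `z₀ ≠ 0` and `e^{2πi/p}` is a
primitive `p`-th root of unity. -/

open Function

theorem iterate_add_apply_of_forall_eq_zero {α : Type*} [AddZeroClass α] {F T : α → α} {x : α}
    {n : ℕ} (h : ∀ ℓ < n, F (T^[ℓ] x) = 0) : (fun y => F y + T y)^[n] x = T^[n] x := by
  induction n with
  | zero => rfl
  | succ n ih =>
    rw [iterate_succ_apply', iterate_succ_apply', ih fun ℓ hℓ => h ℓ (by omega), h n n.lt_succ_self,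
      zero_add]

theorem iterate_mul_fst {M β : Type*} [Monoid M] (a : M) (n : ℕ) (ζ : M × β) :
    (fun ζ : M × β => (a * ζ.1, ζ.2))^[n] ζ = (a ^ n * ζ.1, ζ.2) := by
  change (Prod.map (a * ·) id)^[n] ζ = _
  rw [Prod.map_iterate, mul_left_iterate, iterate_id]
  rfl

theorem Complex.exp_two_pi_I_div_pow (n ℓ : ℕ) :
    exp (2 * Real.pi * I / n) ^ ℓ = exp (2 * Real.pi * I * ℓ / n) := by
  rw [← exp_nat_mul]
  ring_nf

theorem ppp_of_rotated_zeros (p : ℕ)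
    (F : ℂ × ℂ → ℂ × ℂ)
    (z₀ w₀ : ℂ) (hz₀ : z₀ ≠ 0)
    (hzeros : ∀ ℓ : ℕ, ℓ < p →
      F (Complex.exp (2 * Real.pi * Complex.I * ℓ / p) * z₀, w₀) = 0) :
    (fun ζ : ℂ × ℂ =>
        F ζ + (Complex.exp (2 * Real.pi * Complex.I / p) * ζ.1, ζ.2))^[p] (z₀, w₀)
      = (z₀, w₀) ∧
    ∀ j : ℕ, 1 ≤ j → j < p →
      (fun ζ : ℂ × ℂ =>
          F ζ + (Complex.exp (2 * Real.pi * Complex.I / p) * ζ.1, ζ.2))^[j] (z₀, w₀)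
        ≠ (z₀, w₀) := by
  set ω := Complex.exp (2 * Real.pi * Complex.I / p)
  have horbit : ∀ j ≤ p,
      (fun ζ : ℂ × ℂ => F ζ + (ω * ζ.1, ζ.2))^[j] (z₀, w₀) = (ω ^ j * z₀, w₀) := by
    intro j hj
    rw [iterate_add_apply_of_forall_eq_zero, iterate_mul_fst]
    intro ℓ hℓ
    rw [iterate_mul_fst, Complex.exp_two_pi_I_div_pow]
    exact hzeros ℓ (by omega)
  rcases p.eq_zero_or_pos with rfl | hp
  · exact ⟨rfl, fun j _ hj => absurd hj j.not_lt_zero⟩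
  have hω : IsPrimitiveRoot ω p := Complex.isPrimitiveRoot_exp p hp.ne'
  refine ⟨by rw [horbit p le_rfl, hω.pow_eq_one, one_mul], fun j hj hjp h => ?_⟩
  rw [horbit j hjp.le, Prod.mk.injEq] at h
  exact hω.pow_ne_one_of_pos_of_lt (by omega) hjp ((mul_eq_right₀ hz₀).mp h.1)
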